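/- arXiv:2406.16642 — 6 statements merged into one kernel-verified Lean document; each statement's English description precedes it below -/
import Mathlib

section
/- Let n ≥ 1, let 𝔤 be a linear subspace of the real n×n matrices, and let X ∈ 𝔤 be such that Y·X − X·Y ∈ 𝔤 for every Y ∈ 𝔤; let L : 𝔤 → 𝔤 be the induced linear map (so that, as a matrix, L(Y) = Y·X − X·Y). Let 𝒳 be a real Banach space, p : 𝔤 → 𝒳 a linear map, and S : [0,∞) → ℒ(𝒳) a family of bounded linear operators with S(0) = Id such that, for every Y ∈ 𝔤 and every t ≥ 0, the map s ↦ S(s)(p(Y)) has (right-)derivative S(t)(p(L Y)) at t within [0,∞). Then for every t ≥ 0 and every Y ∈ 𝔤: (a) S(t)(p(Y)) = p(exp(t·L)(Y)), where exp(t·L) is the operator exponential of t·L on the finite-dimensional space 𝔤; and (b) as matrices, exp(t·L)(Y) = exp(−t·X) · Y · exp(t·X), where exp on matrices is the matrix exponential. -/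
attribute [local instance] Matrix.linftyOpNormedAddCommGroup Matrix.linftyOpNormedSpace
  Matrix.linftyOpNormedRing Matrix.linftyOpNormedAlgebra

noncomputable local instance (n : ℕ) (g : Submodule ℝ (Matrix (Fin n) (Fin n) ℝ)) :
    NormedRing (g →L[ℝ] g) :=
  ContinuousLinearMap.toNormedRing

local instance (n : ℕ) (g : Submodule ℝ (Matrix (Fin n) (Fin n) ℝ)) :
    IsTopologicalRing (g →L[ℝ] g) :=
  NonUnitalSeminormedRing.toIsTopologicalRing

/-!
Both identities come from one uniqueness principle: if `T : ℝ → (E →L[ℝ] F)` satisfies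
`T' = T ∘ L` on `[0, ∞)`, then `T t = T 0 ∘ exp (t • L)`, since `s ↦ T s ∘ exp ((t - s) • L)` has
vanishing right derivative. Part (a) takes `T s = S s ∘ p`, part (b) takes
`T s Y = exp (-s • X) * Y * exp (s • X)`. Because `𝔤` is finite-dimensional, the pointwise
derivative hypotheses upgrade to derivatives in operator norm, which is what the product rule needs.
-/

open NormedSpace Set

theorem hasDerivWithinAt_clm_of_forall_apply {𝕜 E F : Type*} [NontriviallyNormedField 𝕜]
    [CompleteSpace 𝕜] [NormedAddCommGroup E] [NormedSpace 𝕜 E] [FiniteDimensional 𝕜 E]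
    [NormedAddCommGroup F] [NormedSpace 𝕜 F] {T : 𝕜 → E →L[𝕜] F} {T' : E →L[𝕜] F} {s : Set 𝕜}
    {t : 𝕜} (hT : ∀ Y, HasDerivWithinAt (fun r => T r Y) (T' Y) s t) :
    HasDerivWithinAt T T' s t := by
  set B := Module.finBasis 𝕜 E
  set e : Fin (Module.finrank 𝕜 E) → F →L[𝕜] E →L[𝕜] F := fun i =>
    ContinuousLinearMap.smulRightL 𝕜 E F (LinearMap.toContinuousLinearMap (B.coord i))
  have expand : ∀ f : E →L[𝕜] F, f = ∑ i, e i (f (B i)) := by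
    intro f
    refine ContinuousLinearMap.coe_injective (B.ext fun j => ?_)
    simp [e, Finsupp.single_apply]
  rw [expand T', show T = fun r => ∑ i, e i (T r (B i)) from funext fun r => expand (T r)]
  exact HasDerivWithinAt.fun_sum fun i _ => (e i).hasFDerivAt.comp_hasDerivWithinAt t (hT (B i))

theorem hasDerivAt_exp_sub_smul {𝔸 : Type*} [NormedRing 𝔸] [NormedAlgebra ℝ 𝔸] [CompleteSpace 𝔸]
    (x : 𝔸) (t s : ℝ) :
    HasDerivAt (fun r : ℝ => exp ((t - r) • x)) (-(x * exp ((t - s) • x))) s := by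
  have hsub : HasDerivAt (fun r : ℝ => t - r) (-1) s := by
    simpa using (hasDerivAt_id s).const_sub t
  have h := (hasDerivAt_exp_smul_const' x (t - s)).scomp s hsub
  simpa only [Function.comp_def, neg_smul, one_smul] using h

theorem eq_comp_exp_smul_of_hasDerivWithinAt {E F : Type*} [NormedAddCommGroup E]
    [NormedSpace ℝ E] [CompleteSpace E] [NormedAddCommGroup F] [NormedSpace ℝ F]
    (L : E →L[ℝ] E) (T : ℝ → E →L[ℝ] F)
    (hT : ∀ s, 0 ≤ s → HasDerivWithinAt T ((T s).comp L) (Ici 0) s) {t : ℝ} (ht : 0 ≤ t) :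
    T t = (T 0).comp (exp (t • L)) := by
  set u : ℝ → E →L[ℝ] F := fun s => (T s).comp (exp ((t - s) • L))
  have hu : ∀ s, 0 ≤ s → HasDerivWithinAt u 0 (Ici 0) s := by
    intro s hs
    have h := (hT s hs).clm_comp (hasDerivAt_exp_sub_smul L t s).hasDerivWithinAt
    rwa [ContinuousLinearMap.comp_neg, ContinuousLinearMap.comp_assoc,
      ← ContinuousLinearMap.mul_def, add_neg_cancel] at h
  have hconst := constant_of_has_deriv_right_zero (a := 0) (b := t)
    (fun s hs => (hu s hs.1).continuousWithinAt.mono Icc_subset_Ici_self)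
    (fun s hs => (hu s hs.1).mono (Ici_subset_Ici.2 hs.1)) t (right_mem_Icc.2 ht)
  simpa only [u, sub_self, sub_zero, zero_smul, exp_zero, ContinuousLinearMap.one_def,
    ContinuousLinearMap.comp_id] using hconst

theorem hasDerivAt_exp_neg_smul_mul_mul_exp_smul {𝔸 : Type*} [NormedRing 𝔸] [NormedAlgebra ℝ 𝔸]
    [CompleteSpace 𝔸] (X A : 𝔸) (s : ℝ) :
    HasDerivAt (fun r : ℝ => exp ((-r) • X) * A * exp (r • X))
      (exp ((-s) • X) * (A * X - X * A) * exp (s • X)) s := by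
  have hneg : HasDerivAt (fun r : ℝ => exp ((-r) • X)) (exp ((-s) • X) * -X) s := by
    simpa only [neg_smul, ← smul_neg] using hasDerivAt_exp_smul_const (-X) s
  refine ((hneg.mul_const A).mul (hasDerivAt_exp_smul_const' X s)).congr_deriv ?_
  noncomm_ring

theorem apply_exp_smul_eq_exp_neg_smul_mul_mul_exp_smul {E 𝔸 : Type*} [NormedAddCommGroup E]
    [NormedSpace ℝ E] [FiniteDimensional ℝ E] [NormedRing 𝔸] [NormedAlgebra ℝ 𝔸] [CompleteSpace 𝔸]
    (ι : E →L[ℝ] 𝔸) (X : 𝔸) (L : E →L[ℝ] E) (hL : ∀ Y, ι (L Y) = ι Y * X - X * ι Y)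
    {t : ℝ} (ht : 0 ≤ t) (Y : E) :
    ι (exp (t • L) Y) = exp ((-t) • X) * ι Y * exp (t • X) := by
  have : CompleteSpace E := FiniteDimensional.complete ℝ E
  set conj : ℝ → E →L[ℝ] 𝔸 := fun s =>
    (ContinuousLinearMap.mulLeftRight ℝ 𝔸 (exp ((-s) • X)) (exp (s • X))).comp ι
  have hconj : ∀ s Y, HasDerivWithinAt (fun r => conj r Y) ((conj s).comp L Y) (Ici 0) s := by
    intro s Y
    simpa only [conj, ContinuousLinearMap.comp_apply, ContinuousLinearMap.mulLeftRight_apply, hL]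
      using (hasDerivAt_exp_neg_smul_mul_mul_exp_smul X (ι Y) s).hasDerivWithinAt
  have h := eq_comp_exp_smul_of_hasDerivWithinAt L conj
    (fun s _ => hasDerivWithinAt_clm_of_forall_apply (hconj s)) ht
  simpa only [conj, ContinuousLinearMap.comp_apply, ContinuousLinearMap.mulLeftRight_apply,
    neg_zero, zero_smul, exp_zero, one_mul, mul_one] using (congrArg (· Y) h).symm

theorem center_space_dynamics_general
    (n : ℕ) (g : Submodule ℝ (Matrix (Fin n) (Fin n) ℝ))
    (X : g)
    (L : g →L[ℝ] g)
    (hL : ∀ Y : g,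
      (L Y : Matrix (Fin n) (Fin n) ℝ) =
        (Y : Matrix (Fin n) (Fin n) ℝ) * X - (X : Matrix (Fin n) (Fin n) ℝ) * Y)
    {𝒳 : Type*} [NormedAddCommGroup 𝒳] [NormedSpace ℝ 𝒳]
    (p : g →ₗ[ℝ] 𝒳)
    (S : ℝ → 𝒳 →L[ℝ] 𝒳) (hS0 : S 0 = ContinuousLinearMap.id ℝ 𝒳)
    (hderiv : ∀ Y : g, ∀ t : ℝ, 0 ≤ t →
      HasDerivWithinAt (fun s => S s (p Y)) (S t (p (L Y))) (Set.Ici 0) t) :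
    ∀ t : ℝ, 0 ≤ t → ∀ Y : g,
      S t (p Y) = p (NormedSpace.exp (t • L) Y) ∧
      ((NormedSpace.exp (t • L) Y : g) : Matrix (Fin n) (Fin n) ℝ) =
        NormedSpace.exp ((-t) • (X : Matrix (Fin n) (Fin n) ℝ)) *
          (Y : Matrix (Fin n) (Fin n) ℝ) *
          NormedSpace.exp (t • (X : Matrix (Fin n) (Fin n) ℝ)) := by
  intro t ht Y
  have hS := eq_comp_exp_smul_of_hasDerivWithinAt L (fun s => (S s).comp p.toContinuousLinearMap)
    (fun s hs => hasDerivWithinAt_clm_of_forall_apply fun Y => hderiv Y s hs) ht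
  constructor
  · rw [hS0] at hS
    exact congrArg (· Y) hS
  · exact apply_exp_smul_eq_exp_neg_smul_mul_mul_exp_smul g.subtypeL _ L hL ht Y

/-- **Dynamics on the center space** (Proposition 3.7).
Let `𝔤` be a subspace of the real `n×n` matrices, `X ∈ 𝔤` with `[Y,X] = Y·X − X·Y ∈ 𝔤` for all
`Y ∈ 𝔤`, and `L : 𝔤 → 𝔤` the induced linear map. If `p : 𝔤 → 𝒳` is linear and
`S : [0,∞) → ℒ(𝒳)`, `S(0) = Id`, satisfies `(d/dt) S(t)(p Y) = S(t)(p (L Y))` (right derivative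
within `[0,∞)`), then `S(t)(p Y) = p (exp(tL) Y)` and, as matrices,
`exp(tL) Y = exp(−tX) · Y · exp(tX)`. -/
theorem center_space_dynamics
    (n : ℕ) (hn : 1 ≤ n) (g : Submodule ℝ (Matrix (Fin n) (Fin n) ℝ))
    (X : g)
    (hbracket : ∀ Y : g, (Y : Matrix (Fin n) (Fin n) ℝ) * X - (X : Matrix (Fin n) (Fin n) ℝ) * Y ∈ g)
    (L : g →L[ℝ] g)
    (hL : ∀ Y : g,
      (L Y : Matrix (Fin n) (Fin n) ℝ) =
        (Y : Matrix (Fin n) (Fin n) ℝ) * X - (X : Matrix (Fin n) (Fin n) ℝ) * Y)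
    {𝒳 : Type*} [NormedAddCommGroup 𝒳] [NormedSpace ℝ 𝒳] [CompleteSpace 𝒳]
    (p : g →ₗ[ℝ] 𝒳)
    (S : ℝ → 𝒳 →L[ℝ] 𝒳) (hS0 : S 0 = ContinuousLinearMap.id ℝ 𝒳)
    (hderiv : ∀ Y : g, ∀ t : ℝ, 0 ≤ t →
      HasDerivWithinAt (fun s => S s (p Y)) (S t (p (L Y))) (Set.Ici 0) t) :
    ∀ t : ℝ, 0 ≤ t → ∀ Y : g,
      S t (p Y) = p (NormedSpace.exp (t • L) Y) ∧
      ((NormedSpace.exp (t • L) Y : g) : Matrix (Fin n) (Fin n) ℝ) =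
        NormedSpace.exp ((-t) • (X : Matrix (Fin n) (Fin n) ℝ)) *
          (Y : Matrix (Fin n) (Fin n) ℝ) *
          NormedSpace.exp (t • (X : Matrix (Fin n) (Fin n) ℝ)) :=
  center_space_dynamics_general n g X L hL p S hS0 hderiv
end

section
/- Assume the abstract linear-stability data (see context). Let T > 0, v₀ ∈ 𝒳, and f : ℝ → 𝒳, and define u(t) := Φ(t)(u*) + S₀(t)(v₀) + f(t). Then for every t ∈ [0,T]: ‖u(t) − Φ(t)( Ψ( exp(t·L)(𝒫 v₀) )(u*) )‖ ≤ M₃·e^{−a·t}·‖v₀‖ + C·M₁·K_T²·‖v₀‖² + ‖f(t)‖. -/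
/-!
With `Z = e^{tL} 𝒫 v₀`, the decomposition of `S₀(t)` splits `u(t) - Φ(t) Ψ(Z) u*` into the stable
part `S₀(t) P_s v₀`, which decays like `e^{-at}`, the Taylor remainder `Ψ(Z) u* - u* - p Z`
transported by `Φ(t)`, which is quadratic in `‖Z‖ ≤ K_T ‖v₀‖`, and `f(t)`.
-/

open NormedSpace Set

theorem IsCompact.le_ciSup_of_continuousOn {α β : Type*} [ConditionallyCompleteLinearOrder α]
    [TopologicalSpace α] [ClosedIciTopology α] [TopologicalSpace β] {f : β → α} {K : Set β}
    (hK : IsCompact K) (hf : ContinuousOn f K) {x : β} (hx : x ∈ K) :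
    f x ≤ ⨆ y : K, f y :=
  le_ciSup (image_eq_range f K ▸ hK.bddAbove_image hf) ⟨x, hx⟩

theorem continuous_exp_smul_comp {E F : Type*} [NormedAddCommGroup E] [NormedSpace ℝ E]
    [NormedAddCommGroup F] [NormedSpace ℝ F] [CompleteSpace F] (L : F →L[ℝ] F) (P : E →L[ℝ] F) :
    Continuous fun t : ℝ => (exp (t • L)).comp P :=
  ((ContinuousLinearMap.compL ℝ E F F).flip P).continuous.comp
    (differentiable_exp_smul_const ℝ L).continuous

theorem predicted_phase_estimate_general
    {𝒳 : Type*} [NormedAddCommGroup 𝒳] [NormedSpace ℝ 𝒳]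
    {g : Type*} [NormedAddCommGroup g] [NormedSpace ℝ g] [FiniteDimensional ℝ g]
    (ustar : 𝒳) (C M₁ M₃ a : ℝ) (hC : 0 < C)
    (p : g →L[ℝ] 𝒳) (P : 𝒳 →L[ℝ] g) (L : g →L[ℝ] g)
    (Φ : ℝ → 𝒳 →L[ℝ] 𝒳) (S₀ : ℝ → 𝒳 →L[ℝ] 𝒳) (Ψ : g → 𝒳 →L[ℝ] 𝒳) (Ps : 𝒳 →L[ℝ] 𝒳)
    (hΦBdd : ∀ t : ℝ, 0 ≤ t → ‖Φ t‖ ≤ M₁)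
    (hΨTaylor : ∀ Z : g, ‖Ψ Z ustar - ustar - p Z‖ ≤ C * ‖Z‖ ^ 2)
    (hS₀decomp : ∀ t : ℝ, 0 ≤ t → ∀ φ : 𝒳,
      S₀ t φ = Φ t (p (NormedSpace.exp (t • L) (P φ))) + S₀ t (Ps φ))
    (hStable : ∀ t : ℝ, 0 ≤ t → ‖(S₀ t).comp Ps‖ ≤ M₃ * Real.exp (-a * t))
    (T : ℝ)
    (KT : ℝ)
    (hKT : KT = ⨆ t : Set.Icc (0 : ℝ) T, ‖(NormedSpace.exp ((t : ℝ) • L)).comp P‖)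
    (v₀ : 𝒳) (f : ℝ → 𝒳)
    (u : ℝ → 𝒳) (hu : ∀ t : ℝ, u t = Φ t ustar + S₀ t v₀ + f t) :
    ∀ t ∈ Set.Icc (0 : ℝ) T,
      ‖u t - Φ t (Ψ (NormedSpace.exp (t • L) (P v₀)) ustar)‖ ≤
        M₃ * Real.exp (-a * t) * ‖v₀‖ + C * M₁ * KT ^ 2 * ‖v₀‖ ^ 2 + ‖f t‖ := by
  intro t ht
  set Z := exp (t • L) (P v₀)
  have hZ : ‖Z‖ ≤ KT * ‖v₀‖ := by
    refine ((exp (t • L)).comp P).le_of_opNorm_le ?_ v₀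
    -- `K_T` is a true supremum, not the junk value of an unbounded `⨆`, by continuity on `[0, T]`.
    exact hKT ▸ isCompact_Icc.le_ciSup_of_continuousOn
      (f := fun s => ‖(exp (s • L)).comp P‖) (continuous_exp_smul_comp L P).norm.continuousOn ht
  have hΦ : ‖Φ t‖ ≤ M₁ := hΦBdd t ht.1
  have hdecay : ‖S₀ t (Ps v₀)‖ ≤ M₃ * Real.exp (-a * t) * ‖v₀‖ :=
    ((S₀ t).comp Ps).le_of_opNorm_le (hStable t ht.1) v₀
  have hquadratic : ‖Φ t (Ψ Z ustar - ustar - p Z)‖ ≤ C * M₁ * KT ^ 2 * ‖v₀‖ ^ 2 :=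
    calc ‖Φ t (Ψ Z ustar - ustar - p Z)‖ ≤ M₁ * (C * ‖Z‖ ^ 2) :=
          (Φ t).le_of_opNorm_le_of_le hΦ (hΨTaylor Z)
      _ ≤ M₁ * (C * (KT * ‖v₀‖) ^ 2) := by
          have hM₁ : 0 ≤ M₁ := (norm_nonneg _).trans hΦ
          gcongr
      _ = C * M₁ * KT ^ 2 * ‖v₀‖ ^ 2 := by ring
  have hsplit : u t - Φ t (Ψ Z ustar) = S₀ t (Ps v₀) - Φ t (Ψ Z ustar - ustar - p Z) + f t := by
    rw [hu t, hS₀decomp t ht.1 v₀]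
    simp only [map_sub]
    abel
  calc ‖u t - Φ t (Ψ Z ustar)‖
      = ‖S₀ t (Ps v₀) - Φ t (Ψ Z ustar - ustar - p Z) + f t‖ := by rw [hsplit]
    _ ≤ ‖S₀ t (Ps v₀)‖ + ‖Φ t (Ψ Z ustar - ustar - p Z)‖ + ‖f t‖ :=
        (norm_add_le _ _).trans (add_le_add_left (norm_sub_le _ _) _)
    _ ≤ _ := by gcongr

/-- **Key estimate for the predicted phase** (Lemma 4.1).
Given the abstract linear-stability data (symmetry flow `Φ`, nonlinear symmetry action `Ψ`,
linearized evolution `S₀`, stable projection `Ps`, center-space maps `p, 𝒫, L`), any function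
of the form `u(t) = Φ(t)u* + S₀(t)v₀ + f(t)` satisfies
`‖u(t) − Φ(t)(Ψ(exp(tL)𝒫v₀)u*)‖ ≤ M₃ e^{−at}‖v₀‖ + C M₁ K_T² ‖v₀‖² + ‖f(t)‖` on `[0,T]`. -/
theorem predicted_phase_estimate
    {𝒳 : Type*} [NormedAddCommGroup 𝒳] [NormedSpace ℝ 𝒳] [CompleteSpace 𝒳]
    {g : Type*} [NormedAddCommGroup g] [NormedSpace ℝ g] [FiniteDimensional ℝ g]
    (ustar : 𝒳) (C M₁ M₃ a : ℝ) (hC : 0 < C) (hM₁ : 0 < M₁) (hM₃ : 0 < M₃) (ha : 0 < a)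
    (p : g →L[ℝ] 𝒳) (P : 𝒳 →L[ℝ] g) (L : g →L[ℝ] g)
    (Φ : ℝ → 𝒳 →L[ℝ] 𝒳) (S₀ : ℝ → 𝒳 →L[ℝ] 𝒳) (Ψ : g → 𝒳 →L[ℝ] 𝒳) (Ps : 𝒳 →L[ℝ] 𝒳)
    (hΦBdd : ∀ t : ℝ, 0 ≤ t → ‖Φ t‖ ≤ M₁)
    (hΨTaylor : ∀ Z : g, ‖Ψ Z ustar - ustar - p Z‖ ≤ C * ‖Z‖ ^ 2)
    (hS₀decomp : ∀ t : ℝ, 0 ≤ t → ∀ φ : 𝒳,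
      S₀ t φ = Φ t (p (NormedSpace.exp (t • L) (P φ))) + S₀ t (Ps φ))
    (hStable : ∀ t : ℝ, 0 ≤ t → ‖(S₀ t).comp Ps‖ ≤ M₃ * Real.exp (-a * t))
    (T : ℝ) (hT : 0 < T)
    (KT : ℝ)
    (hKT : KT = ⨆ t : Set.Icc (0 : ℝ) T, ‖(NormedSpace.exp ((t : ℝ) • L)).comp P‖)
    (v₀ : 𝒳) (f : ℝ → 𝒳)
    (u : ℝ → 𝒳) (hu : ∀ t : ℝ, u t = Φ t ustar + S₀ t v₀ + f t) :
    ∀ t ∈ Set.Icc (0 : ℝ) T,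
      ‖u t - Φ t (Ψ (NormedSpace.exp (t • L) (P v₀)) ustar)‖ ≤
        M₃ * Real.exp (-a * t) * ‖v₀‖ + C * M₁ * KT ^ 2 * ‖v₀‖ ^ 2 + ‖f t‖ :=
  predicted_phase_estimate_general ustar C M₁ M₃ a hC p P L Φ S₀ Ψ Ps hΦBdd hΨTaylor hS₀decomp
    hStable T KT hKT v₀ f u hu
end

section
/- Let 𝒳 be a real Banach space and T, M₂, C₁ > 0. Let S : ℝ → ℝ → ℒ(𝒳) satisfy ‖S(t,s)‖ ≤ M₂ for all 0 ≤ s ≤ t ≤ T, and let N : ℝ → 𝒳 → 𝒳 satisfy ‖N(s,w)‖ ≤ C₁·‖w‖² whenever ‖w‖ ≤ 1. Then for every δ > 0 there exists ε > 0 such that: for every v₀ ∈ 𝒳 with ‖v₀‖ ≤ ε and every continuous v : [0,T] → 𝒳 with s ↦ N(s, v(s)) continuous, satisfying the integral equation v(t) = S(t,0)(v₀) + ∫₀ᵗ S(t,s)(N(s, v(s))) ds (Bochner integral) for all t ∈ [0,T], one has ‖v(t) − S(t,0)(v₀)‖ ≤ δ·‖v₀‖ for all t ∈ [0,T]. -/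
open MeasureTheory intervalIntegral

/-- **Bootstrap estimate for the quadratic remainder** (from the proof of Theorem 4.3).
If `‖S(t,s)‖ ≤ M₂` on `0 ≤ s ≤ t ≤ T` and `‖N(s,w)‖ ≤ C₁‖w‖²` for `‖w‖ ≤ 1`, then for every
`δ > 0` there is `ε > 0` such that any continuous mild solution
`v(t) = S(t,0)v₀ + ∫₀ᵗ S(t,s) N(s,v(s)) ds` with `‖v₀‖ ≤ ε` satisfies
`‖v(t) − S(t,0)v₀‖ ≤ δ‖v₀‖` on `[0,T]`. -/
theorem bootstrap_quadratic_remainder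
    {𝒳 : Type*} [NormedAddCommGroup 𝒳] [NormedSpace ℝ 𝒳] [CompleteSpace 𝒳]
    (T M₂ C₁ : ℝ) (hT : 0 < T) (hM₂ : 0 < M₂) (hC₁ : 0 < C₁)
    (S : ℝ → ℝ → 𝒳 →L[ℝ] 𝒳)
    (hSBdd : ∀ s t : ℝ, 0 ≤ s → s ≤ t → t ≤ T → ‖S t s‖ ≤ M₂)
    (N : ℝ → 𝒳 → 𝒳)
    (hN : ∀ (s : ℝ) (w : 𝒳), ‖w‖ ≤ 1 → ‖N s w‖ ≤ C₁ * ‖w‖ ^ 2) :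
    ∀ δ > (0 : ℝ), ∃ ε > (0 : ℝ),
      ∀ v₀ : 𝒳, ‖v₀‖ ≤ ε →
        ∀ v : ℝ → 𝒳, ContinuousOn v (Set.Icc 0 T) →
          ContinuousOn (fun s => N s (v s)) (Set.Icc 0 T) →
          (∀ t ∈ Set.Icc (0 : ℝ) T,
            v t = S t 0 v₀ + ∫ s in (0 : ℝ)..t, S t s (N s (v s))) →
          ∀ t ∈ Set.Icc (0 : ℝ) T, ‖v t - S t 0 v₀‖ ≤ δ * ‖v₀‖ := by
  intro δ hδ
  set η : ℝ := min 1 (1 / (4 * T * M₂ * C₁)) with hη_def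
  have hη_pos : 0 < η := lt_min one_pos (by positivity)
  have hη1 : η ≤ 1 := min_le_left _ _
  have hηT : T * M₂ * C₁ * η ≤ 1 / 4 := by
    have h := min_le_right (1 : ℝ) (1 / (4 * T * M₂ * C₁))
    rw [← hη_def, le_div_iff₀ (by positivity)] at h
    nlinarith
  refine ⟨min (η / (4 * M₂)) (δ / (4 * T * M₂ ^ 3 * C₁)),
    lt_min (by positivity) (by positivity), ?_⟩
  intro v₀ hv₀ v hv hNv hveq
  have hv₀1 : ‖v₀‖ ≤ η / (4 * M₂) := hv₀.trans (min_le_left _ _)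
  have hv₀2 : 4 * T * M₂ ^ 3 * C₁ * ‖v₀‖ ≤ δ := by
    have h := hv₀.trans (min_le_right _ _)
    rw [le_div_iff₀ (by positivity)] at h
    linarith
  have hv₀η : M₂ * ‖v₀‖ ≤ η / 4 := by
    rw [le_div_iff₀ (by positivity)] at hv₀1
    linarith
  -- general bound on the Duhamel integral
  have intBound : ∀ t ∈ Set.Icc (0 : ℝ) T, ∀ K : ℝ, 0 ≤ K →
      (∀ s ∈ Set.Ioc (0 : ℝ) t, ‖N s (v s)‖ ≤ K) →
      ‖∫ s in (0 : ℝ)..t, S t s (N s (v s))‖ ≤ M₂ * K * T := by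
    intro t ht K hK hKs
    have h1 : ‖∫ s in (0 : ℝ)..t, S t s (N s (v s))‖ ≤ M₂ * K * |t - 0| := by
      apply intervalIntegral.norm_integral_le_of_norm_le_const
      intro s hs
      rw [Set.uIoc_of_le ht.1] at hs
      calc ‖S t s (N s (v s))‖ ≤ ‖S t s‖ * ‖N s (v s)‖ := (S t s).le_opNorm _
        _ ≤ M₂ * K :=
          mul_le_mul (hSBdd s t hs.1.le hs.2 ht.2) (hKs s hs) (norm_nonneg _) hM₂.le
    have h2 : |t - 0| ≤ T := by
      rw [sub_zero, abs_of_nonneg ht.1]; exact ht.2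
    calc ‖∫ s in (0 : ℝ)..t, S t s (N s (v s))‖ ≤ M₂ * K * |t - 0| := h1
      _ ≤ M₂ * K * T := mul_le_mul_of_nonneg_left h2 (by positivity)
  -- key one-step improvement
  have L1 : ∀ t ∈ Set.Icc (0 : ℝ) T,
      (∀ s ∈ Set.Ioc (0 : ℝ) t, ‖v s‖ ≤ η) → ‖v t‖ ≤ η / 2 := by
    intro t ht hsmall
    have hIB : ‖∫ s in (0 : ℝ)..t, S t s (N s (v s))‖ ≤ M₂ * (C₁ * η ^ 2) * T := by
      apply intBound t ht _ (by positivity)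
      intro s hs
      have h1 : ‖v s‖ ≤ η := hsmall s hs
      calc ‖N s (v s)‖ ≤ C₁ * ‖v s‖ ^ 2 := hN s _ (h1.trans hη1)
        _ ≤ C₁ * η ^ 2 := by
          have := mul_le_mul h1 h1 (norm_nonneg _) hη_pos.le
          nlinarith
    have hS0 : ‖S t 0 v₀‖ ≤ M₂ * ‖v₀‖ :=
      ((S t 0).le_opNorm v₀).trans
        (mul_le_mul_of_nonneg_right (hSBdd 0 t le_rfl ht.1 ht.2) (norm_nonneg _))
    rw [hveq t ht]
    calc ‖S t 0 v₀ + ∫ s in (0 : ℝ)..t, S t s (N s (v s))‖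
        ≤ ‖S t 0 v₀‖ + ‖∫ s in (0 : ℝ)..t, S t s (N s (v s))‖ := norm_add_le _ _
      _ ≤ M₂ * ‖v₀‖ + M₂ * (C₁ * η ^ 2) * T := add_le_add hS0 hIB
      _ ≤ η / 4 + η / 4 := by
          have := mul_le_mul_of_nonneg_right hηT hη_pos.le
          nlinarith
      _ = η / 2 := by ring
  -- global smallness by continuous induction
  have global : ∀ t ∈ Set.Icc (0 : ℝ) T, ‖v t‖ ≤ η := by
    by_contra hcon
    push_neg at hcon
    obtain ⟨t₀, ht₀, ht₀η⟩ := hcon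
    set Bad : Set ℝ := {t ∈ Set.Icc (0 : ℝ) T | η < ‖v t‖} with hBad_def
    have hBadne : Bad.Nonempty := ⟨t₀, ht₀, ht₀η⟩
    have hBadbd : BddBelow Bad := ⟨0, fun x hx => hx.1.1⟩
    set c := sInf Bad with hc_def
    have hc0 : 0 ≤ c := le_csInf hBadne fun x hx => hx.1.1
    have hcT : c ≤ T := (csInf_le hBadbd ⟨ht₀, ht₀η⟩).trans ht₀.2
    have hcIcc : c ∈ Set.Icc (0 : ℝ) T := ⟨hc0, hcT⟩
    have hbelow : ∀ u ∈ Set.Ico (0 : ℝ) c, ‖v u‖ ≤ η := by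
      intro u hu
      by_contra h
      push_neg at h
      exact absurd (csInf_le hBadbd ⟨⟨hu.1, hu.2.le.trans hcT⟩, h⟩) (not_le.mpr hu.2)
    have hclosed : IsClosed (Set.Icc (0 : ℝ) T ∩ (fun x => ‖v x‖) ⁻¹' Set.Ici η) :=
      hv.norm.preimage_isClosed_of_isClosed isClosed_Icc isClosed_Ici
    have hge : η ≤ ‖v c‖ := by
      have hsub : closure Bad ⊆ Set.Icc (0 : ℝ) T ∩ (fun x => ‖v x‖) ⁻¹' Set.Ici η :=
        hclosed.closure_subset_iff.mpr fun x hx => ⟨hx.1, hx.2.le⟩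
      exact (hsub (csInf_mem_closure hBadne hBadbd)).2
    have hle : ‖v c‖ ≤ η := by
      rcases eq_or_lt_of_le hc0 with h0 | h0
      · have h := L1 c hcIcc (by
          intro s hs
          exact absurd (hs.1.trans_le hs.2) (by rw [← h0]; exact lt_irrefl 0))
        linarith
      · have hcont : Filter.Tendsto (fun u => ‖v u‖) (nhdsWithin c (Set.Iio c))
            (nhds ‖v c‖) := by
          apply (hv.norm c hcIcc).mono_left
          rw [nhdsWithin_le_iff]
          exact Filter.mem_of_superset (Ioo_mem_nhdsLT h0)
            fun u hu => ⟨hu.1.le, hu.2.le.trans hcT⟩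
        refine le_of_tendsto hcont ?_
        exact Filter.mem_of_superset (Ioo_mem_nhdsLT h0)
          fun u hu => hbelow u ⟨hu.1.le, hu.2⟩
    have hhalf : ‖v c‖ ≤ η / 2 := L1 c hcIcc (by
      intro s hs
      rcases eq_or_lt_of_le hs.2 with h | h
      · rw [h]; exact hle
      · exact hbelow s ⟨hs.1.le, h⟩)
    linarith
  -- the maximum and the quadratic gain
  obtain ⟨t', ht', hmax⟩ := isCompact_Icc.exists_isMaxOn
    (Set.nonempty_Icc.mpr hT.le) hv.norm
  set m := ‖v t'‖ with hm_def
  have hm0 : 0 ≤ m := norm_nonneg _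
  have hmη : m ≤ η := global t' ht'
  have hmax' : ∀ s ∈ Set.Icc (0 : ℝ) T, ‖v s‖ ≤ m := hmax
  have hNm : ∀ t ∈ Set.Icc (0 : ℝ) T, ∀ s ∈ Set.Ioc (0 : ℝ) t, ‖N s (v s)‖ ≤ C₁ * (η * m) := by
    intro t ht s hs
    have hsIcc : s ∈ Set.Icc (0 : ℝ) T := ⟨hs.1.le, hs.2.trans ht.2⟩
    have h1 : ‖v s‖ ≤ η := global s hsIcc
    have h2 : ‖v s‖ ≤ m := hmax' s hsIcc
    calc ‖N s (v s)‖ ≤ C₁ * ‖v s‖ ^ 2 := hN s _ (h1.trans hη1)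
      _ ≤ C₁ * (η * m) := by
        have := mul_le_mul h1 h2 (norm_nonneg _) hη_pos.le
        nlinarith
  have hmBound : m ≤ M₂ * ‖v₀‖ + M₂ * (C₁ * (η * m)) * T := by
    have hIB := intBound t' ht' (C₁ * (η * m)) (by positivity) (hNm t' ht')
    have hS0 : ‖S t' 0 v₀‖ ≤ M₂ * ‖v₀‖ :=
      ((S t' 0).le_opNorm v₀).trans
        (mul_le_mul_of_nonneg_right (hSBdd 0 t' le_rfl ht'.1 ht'.2) (norm_nonneg _))
    calc m = ‖v t'‖ := rfl
      _ = ‖S t' 0 v₀ + ∫ s in (0 : ℝ)..t', S t' s (N s (v s))‖ := by rw [hveq t' ht']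
      _ ≤ ‖S t' 0 v₀‖ + ‖∫ s in (0 : ℝ)..t', S t' s (N s (v s))‖ := norm_add_le _ _
      _ ≤ M₂ * ‖v₀‖ + M₂ * (C₁ * (η * m)) * T := add_le_add hS0 hIB
  have hm2 : m ≤ 2 * M₂ * ‖v₀‖ := by
    have h1 := mul_le_mul_of_nonneg_right hηT hm0
    have h2 : 0 ≤ M₂ * ‖v₀‖ := by positivity
    nlinarith
  -- final estimate
  intro t ht
  have heq : v t - S t 0 v₀ = ∫ s in (0 : ℝ)..t, S t s (N s (v s)) := by
    rw [hveq t ht]; abel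
  have hNm2 : ∀ s ∈ Set.Ioc (0 : ℝ) t, ‖N s (v s)‖ ≤ C₁ * m ^ 2 := by
    intro s hs
    have hsIcc : s ∈ Set.Icc (0 : ℝ) T := ⟨hs.1.le, hs.2.trans ht.2⟩
    have h1 : ‖v s‖ ≤ η := global s hsIcc
    have h2 : ‖v s‖ ≤ m := hmax' s hsIcc
    calc ‖N s (v s)‖ ≤ C₁ * ‖v s‖ ^ 2 := hN s _ (h1.trans hη1)
      _ ≤ C₁ * m ^ 2 := by
        have := mul_le_mul h2 h2 (norm_nonneg _) hm0
        nlinarith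
  have hIB := intBound t ht (C₁ * m ^ 2) (by positivity) hNm2
  rw [heq]
  refine hIB.trans ?_
  -- M₂ * (C₁ * m ^ 2) * T ≤ δ * ‖v₀‖
  have hv₀0 : 0 ≤ ‖v₀‖ := norm_nonneg _
  have hA : m * m ≤ (2 * M₂ * ‖v₀‖) * (2 * M₂ * ‖v₀‖) :=
    mul_le_mul hm2 hm2 hm0 (by positivity)
  have hB := mul_le_mul_of_nonneg_left hA (by positivity : (0:ℝ) ≤ M₂ * C₁ * T)
  have hC := mul_le_mul_of_nonneg_right hv₀2 hv₀0
  nlinarith [hB, hC]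
end

section
/- Assume the abstract linear-stability data (see context), and in addition let M₂, C₁ > 0, let S : ℝ → ℝ → ℒ(𝒳) satisfy S(t,0) = S₀(t) and ‖S(t,s)‖ ≤ M₂ for all 0 ≤ s ≤ t, and let N : ℝ → 𝒳 → 𝒳 satisfy ‖N(s,w)‖ ≤ C₁·‖w‖² whenever ‖w‖ ≤ 1. Then for every T > 0 and δ > 0 there exists ε > 0 such that: for every v₀ ∈ 𝒳 with ‖v₀‖ ≤ ε and every continuous v : [0,T] → 𝒳 with s ↦ N(s, v(s)) continuous, satisfying v(t) = S(t,0)(v₀) + ∫₀ᵗ S(t,s)(N(s, v(s))) ds (Bochner integral) for all t ∈ [0,T], the function u(t) := Φ(t)(u*) + v(t) satisfies ‖u(t) − Φ(t)( Ψ( exp(t·L)(𝒫 v₀) )(u*) )‖ ≤ (M₃·e^{−a·t} + δ)·‖v₀‖ for all t ∈ [0,T]. -/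
/-! By the decomposition of `S₀`, the deviation of `u(t)` from the predicted orbit point is the
stable part `S₀(t) P_s v₀`, of size `M₃ e^{-at} ‖v₀‖`, plus the Duhamel integral of the
nonlinearity, minus `Φ(t)` applied to the Taylor remainder of `Ψ` at the phase `exp(tL) 𝒫 v₀`.
A bootstrap argument keeps `‖v‖ ≤ 2 M₂ ‖v₀‖` on `[0, T]` once `v₀` is small, so the last two
terms are `O(‖v₀‖²)` and drop below `δ ‖v₀‖`. -/

open MeasureTheory intervalIntegral Set Filter Topology

theorem ContinuousLinearMap.norm_exp_le {E : Type*} [NormedAddCommGroup E] [NormedSpace ℝ E]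
    (A : E →L[ℝ] E) : ‖NormedSpace.exp A‖ ≤ Real.exp ‖A‖ := by
  rw [NormedSpace.exp_eq_tsum ℝ, Real.exp_eq_exp_ℝ]
  refine tsum_of_norm_bounded (NormedSpace.expSeries_div_hasSum_exp ‖A‖) fun n => ?_
  rw [norm_smul, norm_inv, RCLike.norm_natCast, div_eq_inv_mul]
  gcongr
  rcases n.eq_zero_or_pos with rfl | hn
  · rw [pow_zero, pow_zero]
    exact ContinuousLinearMap.norm_id_le
  · exact norm_pow_le' A hn

theorem ContinuousLinearMap.norm_exp_smul_le {E : Type*} [NormedAddCommGroup E]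
    [NormedSpace ℝ E] (A : E →L[ℝ] E) {t T : ℝ} (ht : |t| ≤ T) :
    ‖NormedSpace.exp (t • A)‖ ≤ Real.exp (T * ‖A‖) := by
  refine (norm_exp_le _).trans (Real.exp_le_exp.2 ?_)
  rw [norm_smul, Real.norm_eq_abs]
  gcongr

theorem ContinuousOn.forall_lt_of_bootstrap {f : ℝ → ℝ} {a b B : ℝ}
    (hf : ContinuousOn f (Icc a b)) (ha : f a < B)
    (hstep : ∀ r ∈ Icc a b, (∀ s ∈ Icc a r, f s ≤ B) → f r < B) :
    ∀ t ∈ Icc a b, f t < B := by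
  by_contra! ⟨t, ht, hBt⟩
  have hcrossing : IsCompact (Icc a b ∩ f ⁻¹' Ici B) :=
    isCompact_Icc.of_isClosed_subset
      (hf.preimage_isClosed_of_isClosed isClosed_Icc isClosed_Ici) inter_subset_left
  obtain ⟨t₁, ⟨ht₁, hBt₁⟩, hfirst⟩ := hcrossing.exists_isLeast ⟨t, ht, hBt⟩
  refine (hstep t₁ ht₁ fun s hs => ?_).not_ge hBt₁
  by_contra! hBs
  -- a point of `[a, t₁]` above `B` would force an earlier crossing of `B`
  have hsb : s ≤ b := hs.2.trans ht₁.2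
  obtain ⟨s', hs', hfs'⟩ := intermediate_value_Icc hs.1
    (hf.mono (Icc_subset_Icc_right hsb)) ⟨ha.le, hBs.le⟩
  have hss' : s' = s :=
    le_antisymm hs'.2 (hs.2.trans (hfirst ⟨⟨hs'.1, hs'.2.trans hsb⟩, hfs'.ge⟩))
  exact hBs.ne' (hss' ▸ hfs')

theorem eventually_mul_norm_lt {E : Type*} [SeminormedAddGroup E] (c : ℝ) {d : ℝ} (hd : 0 < d) :
    ∀ᶠ x in 𝓝 (0 : E), c * ‖x‖ < d := by
  have h := (tendsto_norm_zero (E := E)).const_mul c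
  rw [mul_zero] at h
  exact h.eventually_lt_const hd

section MildSolution

variable {E : Type*} [NormedAddCommGroup E] [NormedSpace ℝ E]
  {S : ℝ → ℝ → E →L[ℝ] E} {N : ℝ → E → E} {M C₁ : ℝ}

theorem norm_integral_propagator_le (hS : ∀ s t : ℝ, 0 ≤ s → s ≤ t → ‖S t s‖ ≤ M)
    (hN : ∀ (s : ℝ) (w : E), ‖w‖ ≤ 1 → ‖N s w‖ ≤ C₁ * ‖w‖ ^ 2) (hC₁ : 0 ≤ C₁)
    {v : ℝ → E} {t B : ℝ} (ht : 0 ≤ t) (hB : B ≤ 1) (hv : ∀ s ∈ Ioc 0 t, ‖v s‖ ≤ B) :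
    ‖∫ s in (0 : ℝ)..t, S t s (N s (v s))‖ ≤ M * C₁ * B ^ 2 * t := by
  have hM : 0 ≤ M := (norm_nonneg _).trans (hS 0 0 le_rfl le_rfl)
  have hbound : ∀ s ∈ uIoc (0 : ℝ) t, ‖S t s (N s (v s))‖ ≤ M * C₁ * B ^ 2 := by
    intro s hs
    rw [uIoc_of_le ht] at hs
    calc ‖S t s (N s (v s))‖ ≤ M * (C₁ * ‖v s‖ ^ 2) :=
          (S t s).le_of_opNorm_le_of_le (hS s t hs.1.le hs.2) (hN s _ ((hv s hs).trans hB))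
      _ ≤ M * (C₁ * B ^ 2) := by gcongr; exact hv s hs
      _ = M * C₁ * B ^ 2 := by ring
  simpa [abs_of_nonneg ht] using norm_integral_le_of_norm_le_const hbound

theorem norm_le_of_mild_solution (hS : ∀ s t : ℝ, 0 ≤ s → s ≤ t → ‖S t s‖ ≤ M)
    (hN : ∀ (s : ℝ) (w : E), ‖w‖ ≤ 1 → ‖N s w‖ ≤ C₁ * ‖w‖ ^ 2) (hC₁ : 0 ≤ C₁)
    {v₀ : E} {v : ℝ → E} {t B : ℝ} (ht : 0 ≤ t) (hB : B ≤ 1) (hv : ∀ s ∈ Ioc 0 t, ‖v s‖ ≤ B)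
    (hmild : v t = S t 0 v₀ + ∫ s in (0 : ℝ)..t, S t s (N s (v s))) :
    ‖v t‖ ≤ M * ‖v₀‖ + M * C₁ * B ^ 2 * t := by
  rw [hmild]
  exact (norm_add_le _ _).trans (add_le_add ((S t 0).le_of_opNorm_le (hS 0 t le_rfl ht) v₀)
    (norm_integral_propagator_le hS hN hC₁ ht hB hv))

theorem norm_le_two_mul_of_mild_solution (hS : ∀ s t : ℝ, 0 ≤ s → s ≤ t → ‖S t s‖ ≤ M)
    (hN : ∀ (s : ℝ) (w : E), ‖w‖ ≤ 1 → ‖N s w‖ ≤ C₁ * ‖w‖ ^ 2) (hC₁ : 0 ≤ C₁)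
    {v₀ : E} {v : ℝ → E} {T : ℝ} (hv : ContinuousOn v (Icc 0 T))
    (hmild : ∀ t ∈ Icc (0 : ℝ) T, v t = S t 0 v₀ + ∫ s in (0 : ℝ)..t, S t s (N s (v s)))
    (hsmall : 4 * M * ‖v₀‖ ≤ 1) (hsmall' : 8 * M ^ 2 * C₁ * T * ‖v₀‖ ≤ 1) :
    ∀ t ∈ Icc (0 : ℝ) T, ‖v t‖ ≤ 2 * M * ‖v₀‖ := by
  intro t ht
  have hM : 0 ≤ M := (norm_nonneg _).trans (hS 0 0 le_rfl le_rfl)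
  have hT : 0 ≤ T := ht.1.trans ht.2
  have hq : 0 ≤ M * C₁ * T := by positivity
  refine le_of_forall_pos_lt_add fun θ hθ => ?_
  -- `θ'` is small enough for `B ≤ 1` and `M C₁ T B ≤ 1/2`, so that the mild equation improves
  -- `‖v‖ ≤ B` to `‖v‖ ≤ M‖v₀‖ + B/2 < B`
  set θ' := min θ (1 / (4 * (M * C₁ * T + 1)))
  have hθ' : 0 < θ' := lt_min hθ (by positivity)
  have hθ'q : 4 * (M * C₁ * T + 1) * θ' ≤ 1 :=
    (le_div_iff₀' (by positivity)).1 ((min_le_right _ _).trans (by rw [one_div]))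
  set B := 2 * M * ‖v₀‖ + θ'
  have hB : B ≤ 1 := by nlinarith [norm_nonneg v₀]
  have hqB : M * C₁ * T * B ≤ 1 / 2 := by nlinarith [norm_nonneg v₀]
  have hstep : ∀ r ∈ Icc (0 : ℝ) T, (∀ s ∈ Ioc 0 r, ‖v s‖ ≤ B) → ‖v r‖ < B := by
    intro r hr hbelow
    have hr' := norm_le_of_mild_solution hS hN hC₁ hr.1 hB hbelow (hmild r hr)
    have : M * C₁ * B ^ 2 * r ≤ M * C₁ * T * B * B := by
      nlinarith [mul_nonneg (mul_nonneg hM hC₁) (sq_nonneg B), hr.2]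
    nlinarith [mul_le_mul_of_nonneg_right hqB (by positivity : (0 : ℝ) ≤ B)]
  have hlt := hv.norm.forall_lt_of_bootstrap
    (hstep 0 ⟨le_rfl, hT⟩ (by simp)) (fun r hr hbelow => hstep r hr
      fun s hs => hbelow s (Ioc_subset_Icc_self hs)) t ht
  exact hlt.trans_le (add_le_add_right (min_le_left _ _) _)

theorem norm_integral_le_sq_of_mild_solution (hS : ∀ s t : ℝ, 0 ≤ s → s ≤ t → ‖S t s‖ ≤ M)
    (hN : ∀ (s : ℝ) (w : E), ‖w‖ ≤ 1 → ‖N s w‖ ≤ C₁ * ‖w‖ ^ 2) (hC₁ : 0 ≤ C₁)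
    {v₀ : E} {v : ℝ → E} {T : ℝ} (hv : ContinuousOn v (Icc 0 T))
    (hmild : ∀ t ∈ Icc (0 : ℝ) T, v t = S t 0 v₀ + ∫ s in (0 : ℝ)..t, S t s (N s (v s)))
    (hsmall : 4 * M * ‖v₀‖ ≤ 1) (hsmall' : 8 * M ^ 2 * C₁ * T * ‖v₀‖ ≤ 1) :
    ∀ t ∈ Icc (0 : ℝ) T,
      ‖∫ s in (0 : ℝ)..t, S t s (N s (v s))‖ ≤ 4 * M ^ 3 * C₁ * T * ‖v₀‖ ^ 2 := by
  intro t ht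
  have hM : 0 ≤ M := (norm_nonneg _).trans (hS 0 0 le_rfl le_rfl)
  calc _ ≤ M * C₁ * (2 * M * ‖v₀‖) ^ 2 * t :=
        norm_integral_propagator_le hS hN hC₁ ht.1 (by nlinarith [norm_nonneg v₀])
          fun s hs => norm_le_two_mul_of_mild_solution hS hN hC₁ hv hmild hsmall hsmall'
            s ⟨hs.1.le, hs.2.trans ht.2⟩
    _ ≤ M * C₁ * (2 * M * ‖v₀‖) ^ 2 * T := by gcongr; exact ht.2
    _ = 4 * M ^ 3 * C₁ * T * ‖v₀‖ ^ 2 := by ring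

end MildSolution

theorem deterministic_orbital_stability_general
    {𝒳 : Type*} [NormedAddCommGroup 𝒳] [NormedSpace ℝ 𝒳]
    {g : Type*} [NormedAddCommGroup g] [NormedSpace ℝ g]
    (ustar : 𝒳) (C M₁ M₃ a : ℝ) (hC : 0 < C)
    (p : g →L[ℝ] 𝒳) (P : 𝒳 →L[ℝ] g) (L : g →L[ℝ] g)
    (Φ : ℝ → 𝒳 →L[ℝ] 𝒳) (S₀ : ℝ → 𝒳 →L[ℝ] 𝒳) (Ψ : g → 𝒳 →L[ℝ] 𝒳) (Ps : 𝒳 →L[ℝ] 𝒳)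
    (hΦBdd : ∀ t : ℝ, 0 ≤ t → ‖Φ t‖ ≤ M₁)
    (hΨTaylor : ∀ Z : g, ‖Ψ Z ustar - ustar - p Z‖ ≤ C * ‖Z‖ ^ 2)
    (hS₀decomp : ∀ t : ℝ, 0 ≤ t → ∀ φ : 𝒳,
      S₀ t φ = Φ t (p (NormedSpace.exp (t • L) (P φ))) + S₀ t (Ps φ))
    (hStable : ∀ t : ℝ, 0 ≤ t → ‖(S₀ t).comp Ps‖ ≤ M₃ * Real.exp (-a * t))
    (M₂ C₁ : ℝ) (hC₁ : 0 < C₁)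
    (S : ℝ → ℝ → 𝒳 →L[ℝ] 𝒳)
    (hS0 : ∀ t : ℝ, S t 0 = S₀ t)
    (hSBdd : ∀ s t : ℝ, 0 ≤ s → s ≤ t → ‖S t s‖ ≤ M₂)
    (N : ℝ → 𝒳 → 𝒳)
    (hN : ∀ (s : ℝ) (w : 𝒳), ‖w‖ ≤ 1 → ‖N s w‖ ≤ C₁ * ‖w‖ ^ 2) :
    ∀ T > (0 : ℝ), ∀ δ > (0 : ℝ), ∃ ε > (0 : ℝ),
      ∀ v₀ : 𝒳, ‖v₀‖ ≤ ε →
        ∀ v : ℝ → 𝒳, ContinuousOn v (Set.Icc 0 T) →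
          ContinuousOn (fun s => N s (v s)) (Set.Icc 0 T) →
          (∀ t ∈ Set.Icc (0 : ℝ) T,
            v t = S t 0 v₀ + ∫ s in (0 : ℝ)..t, S t s (N s (v s))) →
          ∀ t ∈ Set.Icc (0 : ℝ) T,
            ‖(Φ t ustar + v t) - Φ t (Ψ (NormedSpace.exp (t • L) (P v₀)) ustar)‖ ≤
              (M₃ * Real.exp (-a * t) + δ) * ‖v₀‖ := by
  intro T _ δ hδ
  set K := Real.exp (T * ‖L‖) * ‖P‖
  set D := M₁ * C * K ^ 2 + 4 * M₂ ^ 3 * C₁ * T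
  obtain ⟨ε, hε, hsmall⟩ := Metric.nhds_basis_closedBall.eventually_iff.1
    ((eventually_mul_norm_lt (E := 𝒳) (4 * M₂) one_pos).and
      ((eventually_mul_norm_lt (8 * M₂ ^ 2 * C₁ * T) one_pos).and (eventually_mul_norm_lt D hδ)))
  refine ⟨ε, hε, fun v₀ hv₀ v hv _ hmild t ht => ?_⟩
  obtain ⟨h₁, h₂, h₃⟩ := hsmall (mem_closedBall_zero_iff.2 hv₀)
  have hM₁ : 0 ≤ M₁ := (norm_nonneg _).trans (hΦBdd 0 le_rfl)
  set Z := NormedSpace.exp (t • L) (P v₀)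
  have hZ : ‖Z‖ ≤ K * ‖v₀‖ :=
    calc ‖Z‖ ≤ Real.exp (T * ‖L‖) * (‖P‖ * ‖v₀‖) :=
          (NormedSpace.exp (t • L)).le_of_opNorm_le_of_le
            (L.norm_exp_smul_le ((abs_of_nonneg ht.1).trans_le ht.2)) (P.le_opNorm v₀)
      _ = K * ‖v₀‖ := by ring
  have hlin : ‖S₀ t (Ps v₀)‖ ≤ M₃ * Real.exp (-a * t) * ‖v₀‖ :=
    ((S₀ t).comp Ps).le_of_opNorm_le (hStable t ht.1) v₀
  have hphase : ‖Φ t (Ψ Z ustar - ustar - p Z)‖ ≤ M₁ * C * K ^ 2 * ‖v₀‖ ^ 2 :=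
    calc ‖Φ t (Ψ Z ustar - ustar - p Z)‖ ≤ M₁ * (C * ‖Z‖ ^ 2) :=
          (Φ t).le_of_opNorm_le_of_le (hΦBdd t ht.1) (hΨTaylor Z)
      _ ≤ M₁ * (C * (K * ‖v₀‖) ^ 2) := by gcongr
      _ = M₁ * C * K ^ 2 * ‖v₀‖ ^ 2 := by ring
  have hnonlin := norm_integral_le_sq_of_mild_solution hSBdd hN hC₁.le hv hmild h₁.le h₂.le t ht
  have hdecomp : (Φ t ustar + v t) - Φ t (Ψ Z ustar) = S₀ t (Ps v₀) +
      (∫ s in (0 : ℝ)..t, S t s (N s (v s))) - Φ t (Ψ Z ustar - ustar - p Z) := by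
    rw [hmild t ht, hS0, hS₀decomp t ht.1 v₀, map_sub, map_sub]
    abel
  rw [hdecomp]
  refine (norm_sub_le_of_le (norm_add_le _ _) le_rfl).trans ?_
  nlinarith [norm_nonneg v₀]

/-- **Deterministic orbital stability with the predicted phase** (Theorem 4.3).
Under the abstract linear-stability data and the quadratic remainder bound on `N`, for all
`T, δ > 0` there is `ε > 0` such that any continuous mild solution
`v(t) = S(t,0)v₀ + ∫₀ᵗ S(t,s) N(s,v(s)) ds` with `‖v₀‖ ≤ ε` gives rise to a solution
`u(t) = Φ(t)u* + v(t)` satisfying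
`‖u(t) − Φ(t)(Ψ(exp(tL)𝒫v₀)u*)‖ ≤ (M₃ e^{−at} + δ)‖v₀‖` on `[0,T]`. -/
theorem deterministic_orbital_stability
    {𝒳 : Type*} [NormedAddCommGroup 𝒳] [NormedSpace ℝ 𝒳] [CompleteSpace 𝒳]
    {g : Type*} [NormedAddCommGroup g] [NormedSpace ℝ g] [FiniteDimensional ℝ g]
    (ustar : 𝒳) (C M₁ M₃ a : ℝ) (hC : 0 < C) (hM₁ : 0 < M₁) (hM₃ : 0 < M₃) (ha : 0 < a)
    (p : g →L[ℝ] 𝒳) (P : 𝒳 →L[ℝ] g) (L : g →L[ℝ] g)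
    (Φ : ℝ → 𝒳 →L[ℝ] 𝒳) (S₀ : ℝ → 𝒳 →L[ℝ] 𝒳) (Ψ : g → 𝒳 →L[ℝ] 𝒳) (Ps : 𝒳 →L[ℝ] 𝒳)
    (hΦBdd : ∀ t : ℝ, 0 ≤ t → ‖Φ t‖ ≤ M₁)
    (hΨTaylor : ∀ Z : g, ‖Ψ Z ustar - ustar - p Z‖ ≤ C * ‖Z‖ ^ 2)
    (hS₀decomp : ∀ t : ℝ, 0 ≤ t → ∀ φ : 𝒳,
      S₀ t φ = Φ t (p (NormedSpace.exp (t • L) (P φ))) + S₀ t (Ps φ))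
    (hStable : ∀ t : ℝ, 0 ≤ t → ‖(S₀ t).comp Ps‖ ≤ M₃ * Real.exp (-a * t))
    (M₂ C₁ : ℝ) (hM₂ : 0 < M₂) (hC₁ : 0 < C₁)
    (S : ℝ → ℝ → 𝒳 →L[ℝ] 𝒳)
    (hS0 : ∀ t : ℝ, S t 0 = S₀ t)
    (hSBdd : ∀ s t : ℝ, 0 ≤ s → s ≤ t → ‖S t s‖ ≤ M₂)
    (N : ℝ → 𝒳 → 𝒳)
    (hN : ∀ (s : ℝ) (w : 𝒳), ‖w‖ ≤ 1 → ‖N s w‖ ≤ C₁ * ‖w‖ ^ 2) :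
    ∀ T > (0 : ℝ), ∀ δ > (0 : ℝ), ∃ ε > (0 : ℝ),
      ∀ v₀ : 𝒳, ‖v₀‖ ≤ ε →
        ∀ v : ℝ → 𝒳, ContinuousOn v (Set.Icc 0 T) →
          ContinuousOn (fun s => N s (v s)) (Set.Icc 0 T) →
          (∀ t ∈ Set.Icc (0 : ℝ) T,
            v t = S t 0 v₀ + ∫ s in (0 : ℝ)..t, S t s (N s (v s))) →
          ∀ t ∈ Set.Icc (0 : ℝ) T,
            ‖(Φ t ustar + v t) - Φ t (Ψ (NormedSpace.exp (t • L) (P v₀)) ustar)‖ ≤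
              (M₃ * Real.exp (-a * t) + δ) * ‖v₀‖ :=
  deterministic_orbital_stability_general ustar C M₁ M₃ a hC p P L Φ S₀ Ψ Ps hΦBdd hΨTaylor
    hS₀decomp hStable M₂ C₁ hC₁ S hS0 hSBdd N hN
end

section
/- Assume the abstract linear-stability data (see context). Let T > 0, α ≥ 1, and 0 < ε ≤ (4·C·M₁·K_T²·α²)⁻¹. Let v₀ ∈ 𝒳 with ‖v₀‖ ≤ α·ε, let w, z : ℝ → 𝒳 with ‖w(t)‖ ≤ ε/4 for all t ∈ [0,T], and define u(t) := Φ(t)(u*) + S₀(t)(v₀) + w(t) + z(t). Then for every t ∈ [0,T]: ‖u(t) − Φ(t)( Ψ( exp(t·L)(𝒫 v₀) )(u*) )‖ ≤ (M₃·α·e^{−a·t} + 1/2)·ε + ‖z(t)‖. -/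
/-!
Split the deviation as `u(t) - Φ(t)Ψ(Z)u* = -Φ(t)(Ψ(Z)u* - u* - pZ) + S₀(t)P_s v₀ + w(t) + z(t)`
with `Z = exp(tL)𝒫v₀`, using the decomposition of `S₀(t)v₀` into its neutral part `Φ(t)pZ` and
its stable part. Since `‖Z‖ ≤ K_T α ε`, the second-order remainder costs at most
`M₁ C K_T² α² ε² ≤ ε/4` by the smallness of `ε`, the stable part decays like `M₃ e^{-at} α ε`,
and `w` contributes `ε/4`. The constant `K_T` is finite because `t ↦ exp(tL)` is continuous.
-/

open Set

theorem ContinuousLinearMap.norm_exp_smul_comp_le_iSup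
    {E F : Type*} [NormedAddCommGroup E] [NormedSpace ℝ E]
    [NormedAddCommGroup F] [NormedSpace ℝ F] [CompleteSpace F]
    (L : F →L[ℝ] F) (P : E →L[ℝ] F) {a b t : ℝ} (ht : t ∈ Icc a b) :
    ‖(NormedSpace.exp (t • L)).comp P‖ ≤
      ⨆ s : Icc a b, ‖(NormedSpace.exp ((s : ℝ) • L)).comp P‖ := by
  have hcont : Continuous fun s : ℝ => ‖(NormedSpace.exp (s • L)).comp P‖ :=
    ((differentiable_exp_smul_const ℝ L).continuous.clm_comp continuous_const).norm
  exact le_ciSup (isCompact_range (hcont.comp continuous_subtype_val)).bddAbove ⟨t, ht⟩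

theorem mul_mul_sq_le_quarter_of_le_inv {C M K α ε : ℝ} (hε : 0 < ε)
    (hεsmall : ε ≤ (4 * C * M * K ^ 2 * α ^ 2)⁻¹) :
    M * (C * (K * (α * ε)) ^ 2) ≤ ε / 4 := by
  have hpos : 0 < 4 * C * M * K ^ 2 * α ^ 2 := inv_pos.mp (hε.trans_le hεsmall)
  have hprod : ε * (4 * C * M * K ^ 2 * α ^ 2) ≤ 1 := by
    simpa only [inv_mul_cancel₀ hpos.ne'] using mul_le_mul_of_nonneg_right hεsmall hpos.le
  calc M * (C * (K * (α * ε)) ^ 2) = ε * (ε * (4 * C * M * K ^ 2 * α ^ 2)) / 4 := by ring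
    _ ≤ ε * 1 / 4 := by gcongr
    _ = ε / 4 := by ring

theorem pathwise_estimate_good_event_general
    {𝒳 : Type*} [NormedAddCommGroup 𝒳] [NormedSpace ℝ 𝒳]
    {g : Type*} [NormedAddCommGroup g] [NormedSpace ℝ g] [FiniteDimensional ℝ g]
    (ustar : 𝒳) (C M₁ M₃ a : ℝ) (hC : 0 < C)
    (p : g →L[ℝ] 𝒳) (P : 𝒳 →L[ℝ] g) (L : g →L[ℝ] g)
    (Φ : ℝ → 𝒳 →L[ℝ] 𝒳) (S₀ : ℝ → 𝒳 →L[ℝ] 𝒳) (Ψ : g → 𝒳 →L[ℝ] 𝒳) (Ps : 𝒳 →L[ℝ] 𝒳)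
    (hΦBdd : ∀ t : ℝ, 0 ≤ t → ‖Φ t‖ ≤ M₁)
    (hΨTaylor : ∀ Z : g, ‖Ψ Z ustar - ustar - p Z‖ ≤ C * ‖Z‖ ^ 2)
    (hS₀decomp : ∀ t : ℝ, 0 ≤ t → ∀ φ : 𝒳,
      S₀ t φ = Φ t (p (NormedSpace.exp (t • L) (P φ))) + S₀ t (Ps φ))
    (hStable : ∀ t : ℝ, 0 ≤ t → ‖(S₀ t).comp Ps‖ ≤ M₃ * Real.exp (-a * t))
    (T : ℝ)
    (KT : ℝ)
    (hKT : KT = ⨆ t : Set.Icc (0 : ℝ) T, ‖(NormedSpace.exp ((t : ℝ) • L)).comp P‖)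
    (α ε : ℝ) (hε : 0 < ε) (hεsmall : ε ≤ (4 * C * M₁ * KT ^ 2 * α ^ 2)⁻¹)
    (v₀ : 𝒳) (hv₀ : ‖v₀‖ ≤ α * ε)
    (w z : ℝ → 𝒳) (hw : ∀ t ∈ Set.Icc (0 : ℝ) T, ‖w t‖ ≤ ε / 4)
    (u : ℝ → 𝒳) (hu : ∀ t : ℝ, u t = Φ t ustar + S₀ t v₀ + w t + z t) :
    ∀ t ∈ Set.Icc (0 : ℝ) T,
      ‖u t - Φ t (Ψ (NormedSpace.exp (t • L) (P v₀)) ustar)‖ ≤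
        (M₃ * α * Real.exp (-a * t) + 1 / 2) * ε + ‖z t‖ := by
  intro t ht
  set Z := NormedSpace.exp (t • L) (P v₀)
  have hZ : ‖Z‖ ≤ KT * (α * ε) :=
    ((NormedSpace.exp (t • L)).comp P).le_of_opNorm_le_of_le
      (hKT ▸ ContinuousLinearMap.norm_exp_smul_comp_le_iSup L P ht) hv₀
  have hremainder : ‖Φ t (Ψ Z ustar - ustar - p Z)‖ ≤ ε / 4 := by
    refine ((Φ t).le_of_opNorm_le_of_le (hΦBdd t ht.1) ((hΨTaylor Z).trans ?_)).trans
      (mul_mul_sq_le_quarter_of_le_inv hε hεsmall)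
    gcongr
  have hstable : ‖S₀ t (Ps v₀)‖ ≤ M₃ * Real.exp (-a * t) * (α * ε) :=
    ((S₀ t).comp Ps).le_of_opNorm_le_of_le (hStable t ht.1) hv₀
  have hsplit : u t - Φ t (Ψ Z ustar) =
      -Φ t (Ψ Z ustar - ustar - p Z) + S₀ t (Ps v₀) + w t + z t := by
    rw [hu t, hS₀decomp t ht.1 v₀, map_sub, map_sub]
    abel
  calc ‖u t - Φ t (Ψ Z ustar)‖
      ≤ ‖Φ t (Ψ Z ustar - ustar - p Z)‖ + ‖S₀ t (Ps v₀)‖ + ‖w t‖ + ‖z t‖ := by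
        rw [hsplit, ← norm_neg (Φ t _)]
        exact norm_add₄_le
    _ ≤ ε / 4 + M₃ * Real.exp (-a * t) * (α * ε) + ε / 4 + ‖z t‖ := by
        gcongr
        exact hw t ht
    _ = (M₃ * α * Real.exp (-a * t) + 1 / 2) * ε + ‖z t‖ := by ring

/-- **Pathwise estimate on the good event** (deterministic content of Lemma 6.1).
Under the abstract linear-stability data, if `‖v₀‖ ≤ αε`, `0 < ε ≤ (4CM₁K_T²α²)⁻¹`, and the
stochastic convolution `w` satisfies `‖w(t)‖ ≤ ε/4` on `[0,T]`, then the solution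
`u(t) = Φ(t)u* + S₀(t)v₀ + w(t) + z(t)` satisfies
`‖u(t) − Φ(t)(Ψ(exp(tL)𝒫v₀)u*)‖ ≤ (M₃ α e^{−at} + 1/2)ε + ‖z(t)‖` on `[0,T]`. -/
theorem pathwise_estimate_good_event
    {𝒳 : Type*} [NormedAddCommGroup 𝒳] [NormedSpace ℝ 𝒳] [CompleteSpace 𝒳]
    {g : Type*} [NormedAddCommGroup g] [NormedSpace ℝ g] [FiniteDimensional ℝ g]
    (ustar : 𝒳) (C M₁ M₃ a : ℝ) (hC : 0 < C) (hM₁ : 0 < M₁) (hM₃ : 0 < M₃) (ha : 0 < a)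
    (p : g →L[ℝ] 𝒳) (P : 𝒳 →L[ℝ] g) (L : g →L[ℝ] g)
    (Φ : ℝ → 𝒳 →L[ℝ] 𝒳) (S₀ : ℝ → 𝒳 →L[ℝ] 𝒳) (Ψ : g → 𝒳 →L[ℝ] 𝒳) (Ps : 𝒳 →L[ℝ] 𝒳)
    (hΦBdd : ∀ t : ℝ, 0 ≤ t → ‖Φ t‖ ≤ M₁)
    (hΨTaylor : ∀ Z : g, ‖Ψ Z ustar - ustar - p Z‖ ≤ C * ‖Z‖ ^ 2)
    (hS₀decomp : ∀ t : ℝ, 0 ≤ t → ∀ φ : 𝒳,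
      S₀ t φ = Φ t (p (NormedSpace.exp (t • L) (P φ))) + S₀ t (Ps φ))
    (hStable : ∀ t : ℝ, 0 ≤ t → ‖(S₀ t).comp Ps‖ ≤ M₃ * Real.exp (-a * t))
    (T : ℝ) (hT : 0 < T)
    (KT : ℝ)
    (hKT : KT = ⨆ t : Set.Icc (0 : ℝ) T, ‖(NormedSpace.exp ((t : ℝ) • L)).comp P‖)
    (α ε : ℝ) (hα : 1 ≤ α) (hε : 0 < ε) (hεsmall : ε ≤ (4 * C * M₁ * KT ^ 2 * α ^ 2)⁻¹)
    (v₀ : 𝒳) (hv₀ : ‖v₀‖ ≤ α * ε)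
    (w z : ℝ → 𝒳) (hw : ∀ t ∈ Set.Icc (0 : ℝ) T, ‖w t‖ ≤ ε / 4)
    (u : ℝ → 𝒳) (hu : ∀ t : ℝ, u t = Φ t ustar + S₀ t v₀ + w t + z t) :
    ∀ t ∈ Set.Icc (0 : ℝ) T,
      ‖u t - Φ t (Ψ (NormedSpace.exp (t • L) (P v₀)) ustar)‖ ≤
        (M₃ * α * Real.exp (-a * t) + 1 / 2) * ε + ‖z t‖ :=
  pathwise_estimate_good_event_general ustar C M₁ M₃ a hC p P L Φ S₀ Ψ Ps hΦBdd hΨTaylor hS₀decomp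
    hStable T KT hKT α ε hε hεsmall v₀ hv₀ w z hw u hu
end

section
/- Let u : ℝ → ℝ be twice continuously differentiable with u'' square-integrable on ℝ. Then for every h ∈ ℝ the function x ↦ u(x−h) − u(x) + h·u'(x) is square-integrable, and its L²(ℝ)-norm is at most (h²/2)·‖u''‖_{L²(ℝ)}. -/
/-!
By Taylor's formula with integral remainder, `u (x - h) - u x + h u' x = ∫ u'' (x - s h) dν_h(s)`
for the measure `dν_h = (1 - s) h² ds` on `(0, 1]`, of total mass `h² / 2`. All translates of
`u''` have the same `L²` norm, so Minkowski's integral inequality bounds the `L²` norm of the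
left side by `ν_h(ℝ) ‖u''‖₂`. For a family with a common `L²` bound, Minkowski's inequality is just
Cauchy–Schwarz in `s` followed by Tonelli.
-/

open MeasureTheory Set
open scoped ENNReal

section Minkowski

variable {α S : Type*} [MeasurableSpace α] [MeasurableSpace S] {μ : Measure α} {ν : Measure S}

theorem eLpNorm_two_rpow_two {ε : Type*} [ENorm ε] (f : α → ε) :
    eLpNorm f 2 μ ^ (2 : ℝ) = ∫⁻ x, ‖f x‖ₑ ^ (2 : ℝ) ∂μ := by
  simpa using eLpNorm_nnreal_pow_eq_lintegral (f := f) (μ := μ) (p := 2) two_ne_zero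

theorem lintegral_rpow_two_le_measure_univ_mul {f : S → ℝ≥0∞} (hf : AEMeasurable f ν) :
    (∫⁻ s, f s ∂ν) ^ (2 : ℝ) ≤ ν univ * ∫⁻ s, f s ^ (2 : ℝ) ∂ν := by
  have hCS := ENNReal.lintegral_mul_le_Lp_mul_Lq ν Real.HolderConjugate.two_two
    aemeasurable_const hf (f := 1)
  simp only [Pi.mul_apply, Pi.one_apply, one_mul, ENNReal.one_rpow, lintegral_const,
    ← ENNReal.mul_rpow_of_nonneg _ _ (one_div_nonneg.2 zero_le_two)] at hCS
  calc (∫⁻ s, f s ∂ν) ^ (2 : ℝ)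
      ≤ ((ν univ * ∫⁻ s, f s ^ (2 : ℝ) ∂ν) ^ (1 / 2 : ℝ)) ^ (2 : ℝ) := by gcongr
    _ = ν univ * ∫⁻ s, f s ^ (2 : ℝ) ∂ν := by rw [← ENNReal.rpow_mul]; norm_num

theorem eLpNorm_two_lintegral_le [SFinite μ] [SFinite ν] {F : α → S → ℝ≥0∞}
    (hF : Measurable (Function.uncurry F)) {c : ℝ≥0∞} (hc : ∀ s, eLpNorm (F · s) 2 μ ≤ c) :
    eLpNorm (fun x => ∫⁻ s, F x s ∂ν) 2 μ ≤ ν univ * c := by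
  have hF2 : Measurable (Function.uncurry fun x s => F x s ^ (2 : ℝ)) := hF.pow_const _
  rw [← ENNReal.rpow_le_rpow_iff two_pos, eLpNorm_two_rpow_two]
  have hc2 : ∀ s, ∫⁻ x, F x s ^ (2 : ℝ) ∂μ ≤ c ^ (2 : ℝ) := fun s => by
    simpa only [eLpNorm_two_rpow_two, enorm_eq_self] using
      ENNReal.rpow_le_rpow (hc s) zero_le_two
  calc ∫⁻ x, ‖∫⁻ s, F x s ∂ν‖ₑ ^ (2 : ℝ) ∂μ
      ≤ ∫⁻ x, ν univ * ∫⁻ s, F x s ^ (2 : ℝ) ∂ν ∂μ := lintegral_mono fun x =>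
        lintegral_rpow_two_le_measure_univ_mul hF.of_uncurry_left.aemeasurable
    _ = ν univ * ∫⁻ s, ∫⁻ x, F x s ^ (2 : ℝ) ∂μ ∂ν := by
        rw [lintegral_const_mul _ hF2.lintegral_prod_right,
          lintegral_lintegral_swap hF2.aemeasurable]
    _ ≤ ν univ * ∫⁻ _, c ^ (2 : ℝ) ∂ν := by gcongr with s; exact hc2 s
    _ = (ν univ * c) ^ (2 : ℝ) := by
        rw [lintegral_const, ENNReal.mul_rpow_of_nonneg _ _ zero_le_two]
        simp only [ENNReal.rpow_two]
        ring

end Minkowski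

theorem sub_add_mul_deriv_eq_integral_iteratedDeriv_two {u : ℝ → ℝ} (hu : ContDiff ℝ 2 u)
    (x h : ℝ) :
    u (x - h) - u x + h * deriv u x =
      ∫ s in (0 : ℝ)..1, (1 - s) * h ^ 2 * iteratedDeriv 2 u (x - s * h) := by
  have htaylor := map_add_eq_sum_add_integral_iteratedFDeriv (n := 1) (x := x) (y := -h)
    fun t _ => hu.contDiffAt
  simp only [iteratedFDeriv_apply_eq_iteratedDeriv_mul_prod, Finset.sum_range_succ, ← sub_eq_add_neg,
    Finset.range_zero, Finset.prod_const, Finset.card_univ, Fintype.card_fin, smul_eq_mul,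
    Finset.sum_empty, Nat.factorial_zero, Nat.factorial_one, Nat.cast_one, inv_one, pow_zero,
    pow_one, iteratedDeriv_zero, iteratedDeriv_one, one_mul, zero_add, neg_mul, mul_neg,
    Nat.reduceAdd, even_two, Even.neg_pow] at htaylor
  rw [htaylor]
  simp only [mul_assoc]
  ring

theorem eLpNorm_comp_sub_right {G E : Type*} [MeasurableSpace G] [AddGroup G] [MeasurableAdd G]
    [TopologicalSpace E] [ContinuousENorm E] {μ : Measure G} [μ.IsAddRightInvariant] {f : G → E}
    (hf : AEStronglyMeasurable f μ) (a : G) (p : ℝ≥0∞) :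
    eLpNorm (fun x => f (x - a)) p μ = eLpNorm f p μ :=
  eLpNorm_comp_measurePreserving hf (measurePreserving_sub_right μ a)

noncomputable def taylorRemainderMeasure (h : ℝ) : Measure ℝ :=
  (volume.restrict (Ioc 0 1)).withDensity fun s => ENNReal.ofReal ((1 - s) * h ^ 2)

theorem taylorRemainderMeasure_univ (h : ℝ) :
    taylorRemainderMeasure h univ = ENNReal.ofReal (h ^ 2 / 2) := by
  rw [taylorRemainderMeasure, withDensity_apply _ MeasurableSet.univ, Measure.restrict_univ,
    ← ofReal_integral_eq_lintegral_ofReal, ← intervalIntegral.integral_of_le zero_le_one]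
  · congr 1
    simp [intervalIntegral.integral_comp_sub_left (fun s => s)]
    ring
  · exact (by fun_prop : Continuous fun s : ℝ => (1 - s) * h ^ 2).integrableOn_Ioc
  · filter_upwards [ae_restrict_mem measurableSet_Ioc] with s hs
    have : 0 ≤ 1 - s := by linarith [hs.2]
    positivity

instance (h : ℝ) : IsFiniteMeasure (taylorRemainderMeasure h) :=
  ⟨by simp [taylorRemainderMeasure_univ]⟩

theorem enorm_sub_add_mul_deriv_le_lintegral {u : ℝ → ℝ} (hu : ContDiff ℝ 2 u) (x h : ℝ) :
    ‖u (x - h) - u x + h * deriv u x‖ₑ ≤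
      ∫⁻ s, ‖iteratedDeriv 2 u (x - s * h)‖ₑ ∂taylorRemainderMeasure h := by
  have hu'' : Continuous (iteratedDeriv 2 u) := hu.continuous_iteratedDeriv 2 le_rfl
  rw [sub_add_mul_deriv_eq_integral_iteratedDeriv_two hu, intervalIntegral.integral_of_le zero_le_one,
    taylorRemainderMeasure, lintegral_withDensity_eq_lintegral_mul₀ (by fun_prop) (by fun_prop)]
  refine (enorm_integral_le_lintegral_enorm _).trans (setLIntegral_mono ?_ fun s hs => ?_)
  · exact (by fun_prop : Measurable fun s : ℝ => ENNReal.ofReal ((1 - s) * h ^ 2)).mul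
      (by fun_prop : Continuous fun s => iteratedDeriv 2 u (x - s * h)).measurable.enorm
  · have : 0 ≤ (1 - s) * h ^ 2 := mul_nonneg (by linarith [hs.2]) (sq_nonneg h)
    rw [enorm_mul, Real.enorm_of_nonneg this]
    rfl

theorem eLpNorm_sub_add_mul_deriv_le {u : ℝ → ℝ} (hu : ContDiff ℝ 2 u) (h : ℝ) :
    eLpNorm (fun x => u (x - h) - u x + h * deriv u x) 2 volume ≤
      ENNReal.ofReal (h ^ 2 / 2) * eLpNorm (iteratedDeriv 2 u) 2 volume := by
  have hu'' : Continuous (iteratedDeriv 2 u) := hu.continuous_iteratedDeriv 2 le_rfl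
  calc _ ≤ eLpNorm (fun x => ∫⁻ s, ‖iteratedDeriv 2 u (x - s * h)‖ₑ ∂taylorRemainderMeasure h) 2
          volume :=
        eLpNorm_mono_enorm fun x => enorm_sub_add_mul_deriv_le_lintegral hu x h
    _ ≤ taylorRemainderMeasure h univ * eLpNorm (iteratedDeriv 2 u) 2 volume := by
        refine eLpNorm_two_lintegral_le (F := fun x s => ‖iteratedDeriv 2 u (x - s * h)‖ₑ)
          ?_ fun s => le_of_eq ?_
        · exact (by fun_prop : Continuous fun p : ℝ × ℝ =>
            iteratedDeriv 2 u (p.1 - p.2 * h)).measurable.enorm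
        · rw [eLpNorm_enorm, eLpNorm_comp_sub_right hu''.aestronglyMeasurable]
    _ = ENNReal.ofReal (h ^ 2 / 2) * eLpNorm (iteratedDeriv 2 u) 2 volume := by
        rw [taylorRemainderMeasure_univ]

/-- **Taylor estimate for translations in `L²`** (Assumption 3.2, eq. (3.2), for the
FitzHugh–Nagumo example). If `u` is `C²` with `u''` square-integrable, then for every `h ∈ ℝ`
the function `x ↦ u(x−h) − u(x) + h·u'(x)` is square-integrable with
`‖u(·−h) − u + h·u'‖_{L²} ≤ (h²/2)·‖u''‖_{L²}`. -/
theorem taylor_translation_L2_estimate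
    (u : ℝ → ℝ) (hu : ContDiff ℝ 2 u)
    (hu'' : MemLp (iteratedDeriv 2 u) 2 volume) :
    ∀ h : ℝ,
      MemLp (fun x => u (x - h) - u x + h * deriv u x) 2 volume ∧
      eLpNorm (fun x => u (x - h) - u x + h * deriv u x) 2 volume ≤
        ENNReal.ofReal (h ^ 2 / 2) * eLpNorm (iteratedDeriv 2 u) 2 volume := by
  intro h
  have hbound := eLpNorm_sub_add_mul_deriv_le hu h
  have hcont : Continuous fun x => u (x - h) - u x + h * deriv u x := by
    have := hu.continuous
    have := hu.continuous_deriv one_le_two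
    fun_prop
  exact ⟨⟨hcont.aestronglyMeasurable,
    hbound.trans_lt (ENNReal.mul_lt_top ENNReal.ofReal_lt_top hu''.eLpNorm_lt_top)⟩, hbound⟩
end
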